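/- arXiv:2206.09905 — 3 statements merged into one kernel-verified Lean document; each statement's English description precedes it below -/
import Mathlib

section
/- Let X : [0,T] → V be α-Hölder with α ∈ (1/3, 1/2], let f : U → W be twice continuously differentiable with bounded first and second derivatives on the range of Z, and let (Z, Z') be a controlled path with respect to X with values in U. Then η_t := f(Z_t) defines a controlled path (η, η') with Gubinelli derivative η'_t = Df(Z_t) ∘ Z'_t, i.e., the remainder R^η_{st} := f(Z_t) − f(Z_s) − Df(Z_s)(Z'_s X_{st}) satisfies sup_{s<t} |R^η_{st}|/|t−s|^{2α} < ∞. -/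
open Set

/-!
Write `R^η_{st} = (f(Z_t) - f(Z_s) - Df(Z_s)(Z_t - Z_s)) + Df(Z_s)(R^Z_{st})`. The first term is
a second-order Taylor remainder, bounded by `‖D²f‖ ‖Z_t - Z_s‖² ≲ |t - s|^{2α}` since the segment
`[Z_s, Z_t]` lies in the convex hull of the range of `Z`; the second is bounded by
`‖Df‖ ‖R^Z_{st}‖ ≲ |t - s|^{2α}`.
-/

namespace Convex

variable {𝕜 E F : Type*} [NontriviallyNormedField 𝕜] [IsRCLikeNormedField 𝕜]
  [NormedAddCommGroup E] [NormedSpace ℝ E] [NormedSpace 𝕜 E]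
  [NormedAddCommGroup F] [NormedSpace 𝕜 F]

theorem norm_image_sub_sub_fderiv_le {f : E → F} {s : Set E} {M : ℝ} {x y : E}
    (hs : Convex ℝ s) (hf : ∀ z ∈ s, DifferentiableAt 𝕜 f z)
    (hf' : ∀ z ∈ s, DifferentiableAt 𝕜 (fderiv 𝕜 f) z)
    (bound : ∀ z ∈ s, ‖fderiv 𝕜 (fderiv 𝕜 f) z‖ ≤ M) (hx : x ∈ s) (hy : y ∈ s) :
    ‖f y - f x - fderiv 𝕜 f x (y - x)‖ ≤ M * ‖y - x‖ ^ 2 := by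
  have hM : 0 ≤ M := (norm_nonneg (fderiv 𝕜 (fderiv 𝕜 f) x)).trans (bound x hx)
  have hseg : segment ℝ x y ⊆ s := hs.segment_subset hx hy
  have hDf_near : ∀ z ∈ segment ℝ x y, ‖fderiv 𝕜 f z - fderiv 𝕜 f x‖ ≤ M * ‖y - x‖ :=
    fun z hz => calc
      ‖fderiv 𝕜 f z - fderiv 𝕜 f x‖ ≤ M * ‖z - x‖ :=
        hs.norm_image_sub_le_of_norm_fderiv_le hf' bound hx (hseg hz)
      _ ≤ M * ‖y - x‖ := by gcongr; exact norm_sub_le_of_mem_segment hz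
  calc ‖f y - f x - fderiv 𝕜 f x (y - x)‖ ≤ M * ‖y - x‖ * ‖y - x‖ :=
        (convex_segment x y).norm_image_sub_le_of_norm_fderiv_le' (fun z hz => hf z (hseg hz))
          hDf_near (left_mem_segment ℝ x y) (right_mem_segment ℝ x y)
    _ = M * ‖y - x‖ ^ 2 := by ring

end Convex

theorem ContinuousLinearMap.norm_sub_apply_le_add {𝕜 E F : Type*} [NontriviallyNormedField 𝕜]
    [SeminormedAddCommGroup E] [NormedSpace 𝕜 E] [SeminormedAddCommGroup F] [NormedSpace 𝕜 F]
    (L : E →L[𝕜] F) (w : F) (u v : E) :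
    ‖w - L v‖ ≤ ‖w - L u‖ + ‖L‖ * ‖u - v‖ := calc
  ‖w - L v‖ = ‖(w - L u) + L (u - v)‖ := by rw [map_sub]; abel_nf
  _ ≤ ‖w - L u‖ + ‖L‖ * ‖u - v‖ := (norm_add_le _ _).trans (by gcongr; exact L.le_opNorm _)

theorem Real.rpow_two_mul {x : ℝ} (hx : 0 ≤ x) (y : ℝ) : x ^ (2 * y) = (x ^ y) ^ 2 := by
  rw [mul_comm]; exact_mod_cast Real.rpow_mul_natCast hx y 2

theorem controlled_composition_general {U V W : Type*}
    [NormedAddCommGroup U] [NormedSpace ℝ U]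
    [NormedAddCommGroup V] [NormedSpace ℝ V]
    [NormedAddCommGroup W] [NormedSpace ℝ W]
    (α T : ℝ)
    (X : ℝ → V)
    (Z : ℝ → U) (Z' : ℝ → V →L[ℝ] U) (CZ CRZ : ℝ)
    (hZ : ∀ s t : ℝ, 0 ≤ s → s ≤ t → t ≤ T → ‖Z t - Z s‖ ≤ CZ * |t - s| ^ α)
    (hRZ : ∀ s t : ℝ, 0 ≤ s → s ≤ t → t ≤ T →
      ‖Z t - Z s - Z' s (X t - X s)‖ ≤ CRZ * |t - s| ^ (2*α))
    (f : U → W) (hf : ContDiff ℝ 2 f) (M1 M2 : ℝ)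
    (hDf : ∀ x ∈ convexHull ℝ (Z '' Icc 0 T), ‖fderiv ℝ f x‖ ≤ M1)
    (hD2f : ∀ x ∈ convexHull ℝ (Z '' Icc 0 T),
      ‖fderiv ℝ (fderiv ℝ f) x‖ ≤ M2) :
    ∃ C : ℝ, ∀ s t : ℝ, 0 ≤ s → s ≤ t → t ≤ T →
      ‖f (Z t) - f (Z s) - fderiv ℝ f (Z s) (Z' s (X t - X s))‖
        ≤ C * |t - s| ^ (2*α) := by
  refine ⟨M1 * CRZ + M2 * CZ ^ 2, fun s t hs hst htT => ?_⟩
  have hZ_mem : ∀ u ∈ Icc 0 T, Z u ∈ convexHull ℝ (Z '' Icc 0 T) :=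
    fun u hu => subset_convexHull ℝ _ (mem_image_of_mem Z hu)
  have hZs := hZ_mem s ⟨hs, hst.trans htT⟩
  have hZt := hZ_mem t ⟨hs.trans hst, htT⟩
  have htaylor := (convex_convexHull ℝ _).norm_image_sub_sub_fderiv_le
    (fun z _ => hf.differentiable two_ne_zero z)
    (fun z _ => (hf.fderiv_right (m := 1) le_rfl).differentiable one_ne_zero z) hD2f hZs hZt
  have hM1 : 0 ≤ M1 := (norm_nonneg (fderiv ℝ f (Z s))).trans (hDf _ hZs)
  have hM2 : 0 ≤ M2 := (norm_nonneg (fderiv ℝ (fderiv ℝ f) (Z s))).trans (hD2f _ hZs)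
  calc ‖f (Z t) - f (Z s) - fderiv ℝ f (Z s) (Z' s (X t - X s))‖
      ≤ ‖f (Z t) - f (Z s) - fderiv ℝ f (Z s) (Z t - Z s)‖
        + ‖fderiv ℝ f (Z s)‖ * ‖Z t - Z s - Z' s (X t - X s)‖ :=
        (fderiv ℝ f (Z s)).norm_sub_apply_le_add _ _ _
    _ ≤ M2 * (CZ * |t - s| ^ α) ^ 2 + M1 * (CRZ * |t - s| ^ (2*α)) := by
        gcongr
        · exact htaylor.trans (by gcongr; exact hZ s t hs hst htT)
        · exact hDf _ hZs
        · exact hRZ s t hs hst htT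
    _ = (M1 * CRZ + M2 * CZ ^ 2) * |t - s| ^ (2*α) := by
        rw [Real.rpow_two_mul (abs_nonneg _)]; ring

/-- If `f : U → W` is twice continuously differentiable with first
and second derivatives bounded on (the closed convex hull of) the range of the
controlled path `(Z, Z')`, then `η_t := f (Z_t)` is a controlled path with
Gubinelli derivative `η'_t = Df(Z_t) ∘ Z'_t`, i.e. the remainder
`R^η_{st} = f(Z_t) − f(Z_s) − Df(Z_s)(Z'_s X_{st})` is 2α-Hölder. -/
theorem controlled_composition {U V W : Type*}
    [NormedAddCommGroup U] [NormedSpace ℝ U]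
    [NormedAddCommGroup V] [NormedSpace ℝ V]
    [NormedAddCommGroup W] [NormedSpace ℝ W]
    (α T : ℝ) (hα1 : 1/3 < α) (hα2 : α ≤ 1/2) (hT : 0 < T)
    (X : ℝ → V) (CX : ℝ)
    (hX : ∀ s t : ℝ, 0 ≤ s → s ≤ t → t ≤ T → ‖X t - X s‖ ≤ CX * |t - s| ^ α)
    (Z : ℝ → U) (Z' : ℝ → V →L[ℝ] U) (CZ CZ' CRZ : ℝ)
    (hZ : ∀ s t : ℝ, 0 ≤ s → s ≤ t → t ≤ T → ‖Z t - Z s‖ ≤ CZ * |t - s| ^ α)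
    (hZ' : ∀ s t : ℝ, 0 ≤ s → s ≤ t → t ≤ T → ‖Z' t - Z' s‖ ≤ CZ' * |t - s| ^ α)
    (hRZ : ∀ s t : ℝ, 0 ≤ s → s ≤ t → t ≤ T →
      ‖Z t - Z s - Z' s (X t - X s)‖ ≤ CRZ * |t - s| ^ (2*α))
    (f : U → W) (hf : ContDiff ℝ 2 f) (M1 M2 : ℝ)
    (hDf : ∀ x ∈ convexHull ℝ (Z '' Icc 0 T), ‖fderiv ℝ f x‖ ≤ M1)
    (hD2f : ∀ x ∈ convexHull ℝ (Z '' Icc 0 T),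
      ‖fderiv ℝ (fderiv ℝ f) x‖ ≤ M2) :
    ∃ C : ℝ, ∀ s t : ℝ, 0 ≤ s → s ≤ t → t ≤ T →
      ‖f (Z t) - f (Z s) - fderiv ℝ f (Z s) (Z' s (X t - X s))‖
        ≤ C * |t - s| ^ (2*α) :=
  controlled_composition_general α T X Z Z' CZ CRZ hZ hRZ f hf M1 M2 hDf hD2f
end

section
/- Let (X, 𝕏) be an α-Hölder rough path, (Y, Y') a controlled path with values in L(W, U′), and (Z, Z') a controlled path with values in W. Then the germ Ξ_{st} := Y_s Z_{st} + (Y'_s · Z'_s) 𝕏_{st}, where (Y'_s · Z'_s)(v ⊗ v′) := Y'_s(v)(Z'_s(v′)), satisfies |Ξ_{st} − Ξ_{su} − Ξ_{ut}| ≤ C(‖Y'‖_∞‖Z'‖_α‖X‖_α² + ‖Y‖_α‖R^Z‖_{2α} + ‖R^Y‖_{2α}‖Z'‖_∞‖X‖_α + ‖Y'·Z'‖_α‖𝕏‖_{2α})|t−s|^{3α} for all s ≤ u ≤ t, with C depending only on α and T. Consequently (by the sewing lemma) the integral ∫_0^t Y_r d_X Z_r := lim_{|π|→0} Σ_{[u,v]∈π}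 (Y_u Z_{uv} + (Y'_u · Z'_u)𝕏_{uv}) exists. -/
open Set Filter

/-- A Riemann-sum limit over partitions of `[s,t]` with mesh tending to zero. -/
def IsPartitionLimit {E : Type*} [NormedAddCommGroup E]
    (s t : ℝ) (F : ℝ → ℝ → E) (I : E) : Prop :=
  ∀ (p : ℕ → ℕ → ℝ) (k : ℕ → ℕ) (mesh : ℕ → ℝ),
    (∀ n, p n 0 = s) → (∀ n, p n (k n) = t) →
    (∀ n i, i < k n → p n i ≤ p n (i+1)) →
    (∀ n i, i < k n → p n (i+1) - p n i ≤ mesh n) →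
    Tendsto mesh atTop (nhds 0) →
    Tendsto (fun n => ∑ i ∈ Finset.range (k n), F (p n i) (p n (i+1)))
      atTop (nhds I)

/-!
Chen's relation turns the defect `Ξ_{st} - Ξ_{su} - Ξ_{ut}` of the germ into minus the sum of
`(Y_u - Y_s) R^Z_{ut}`, `R^Y_{su} Z'_u X_{ut}`, `Y'_s X_{su} (Z'_u - Z'_s) X_{ut}` and
`((Y'·Z')_u - (Y'·Z')_s) 𝕏_{ut}`: each is a product of factors of Hölder orders adding up to
`3α > 1`, which gives the coherence bound.

The integral then comes from the sewing lemma for a germ `A` with `‖δA_{sut}‖ ≤ K (t - s)^γ`,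
`γ > 1`. Riemann sums of `A` over the level-`n` dyadic grid of `[0, T]`, projected onto `[a, b]`,
converge geometrically fast in `n`, since passing to level `n + 1` inserts one midpoint per
interval. The limit `J(a, b)` is additive, because inserting a point `u` also changes a level-`n`
sum by at most `K (T / 2^n)^(γ - 1) (b - a)`, and `‖J(a, b) - A(a, b)‖ ≤ C K (b - a)^γ` by the
maximal inequality obtained by bisection. For any partition of `[0, t]` the difference between the
Riemann sum and `J(0, t)` is then a sum of such local errors, at most `C K mesh^(γ - 1) t`.
-/

theorem sum_range_two_mul {M : Type*} [AddCommMonoid M] (f : ℕ → M) :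
    ∀ n, ∑ i ∈ Finset.range (2 * n), f i = ∑ i ∈ Finset.range n, (f (2 * i) + f (2 * i + 1))
  | 0 => by simp
  | n + 1 => by
    rw [mul_add, mul_one, Finset.sum_range_succ, Finset.sum_range_succ, Finset.sum_range_succ,
      sum_range_two_mul f n, add_assoc]

theorem exists_le_lt_succ {p : ℕ → ℝ} {m : ℝ} (h0 : p 0 ≤ m) :
    ∀ {n : ℕ}, m < p n → ∃ j < n, p j ≤ m ∧ m < p (j + 1)
  | 0, h => absurd h (not_lt.mpr h0)
  | n + 1, h => by
    by_cases hn : p n ≤ m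
    · exact ⟨n, n.lt_succ_self, hn, h⟩
    · obtain ⟨j, hj, hjm⟩ := exists_le_lt_succ h0 (not_le.mp hn)
      exact ⟨j, hj.trans n.lt_succ_self, hjm⟩

theorem sum_sub_rpow_le {p : ℕ → ℝ} {n : ℕ} {γ δ : ℝ} (hγ : 1 ≤ γ)
    (hp : ∀ i < n, 0 ≤ p (i + 1) - p i ∧ p (i + 1) - p i ≤ δ) :
    ∑ i ∈ Finset.range n, (p (i + 1) - p i) ^ γ ≤ δ ^ (γ - 1) * (p n - p 0) := by
  rw [← Finset.sum_range_sub, Finset.mul_sum]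
  refine Finset.sum_le_sum fun i hi => ?_
  obtain ⟨h0, hδ⟩ := hp i (Finset.mem_range.mp hi)
  calc (p (i + 1) - p i) ^ γ = (p (i + 1) - p i) ^ (γ - 1) * (p (i + 1) - p i) := by
        rw [← Real.rpow_add_one' h0 (by linarith), sub_add_cancel]
    _ ≤ δ ^ (γ - 1) * (p (i + 1) - p i) := by gcongr

theorem div_two_pow_rpow {T : ℝ} (hT : 0 ≤ T) (β : ℝ) (n : ℕ) :
    (T / 2 ^ n) ^ β = T ^ β * ((2 : ℝ) ^ (-β)) ^ n := by
  rw [Real.div_rpow hT (by positivity), ← Real.rpow_natCast_mul zero_le_two,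
    ← Real.rpow_mul_natCast zero_le_two, div_eq_mul_inv, ← Real.rpow_neg zero_le_two]
  ring_nf

theorem tendsto_div_two_pow_rpow {T β : ℝ} (hT : 0 ≤ T) (hβ : 0 < β) :
    Tendsto (fun n : ℕ => (T / 2 ^ n) ^ β) atTop (nhds 0) := by
  simp_rw [div_two_pow_rpow hT]
  simpa using (tendsto_pow_atTop_nhds_zero_of_lt_one (by positivity)
    (Real.rpow_lt_one_of_one_lt_of_neg one_lt_two (neg_lt_zero.2 hβ))).const_mul (T ^ β)

theorem norm_le_mul_abs_rpow_of_subinterval {F : Type*} [SeminormedAddCommGroup F]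
    {f : ℝ → ℝ → F} {c β T s a b t : ℝ}
    (hf : ∀ s t : ℝ, 0 ≤ s → s ≤ t → t ≤ T → ‖f s t‖ ≤ c * |t - s| ^ β) (hβ : 0 ≤ β)
    (hs : 0 ≤ s) (hsa : s ≤ a) (hab : a ≤ b) (hbt : b ≤ t) (ht : t ≤ T) :
    ‖f a b‖ ≤ c * |t - s| ^ β := by
  rcases (hsa.trans (hab.trans hbt)).eq_or_lt with rfl | hst
  · obtain rfl : a = s := le_antisymm (hab.trans hbt) hsa
    obtain rfl : b = a := le_antisymm hbt hab
    exact hf _ _ hs le_rfl ht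
  have hc : 0 ≤ c := nonneg_of_mul_nonneg_left ((norm_nonneg _).trans (hf s t hs hst.le ht))
    (Real.rpow_pos_of_pos (abs_pos.2 (sub_ne_zero.2 hst.ne')) _)
  refine (hf a b (hs.trans hsa) hab (hbt.trans ht)).trans ?_
  gcongr

noncomputable def sewingConst (γ : ℝ) : ℝ := 2 / (1 - 2 ^ (1 - γ))

theorem sewingConst_pos {γ : ℝ} (hγ : 1 < γ) : 0 < sewingConst γ := by
  have : (2 : ℝ) ^ (1 - γ) < 1 := Real.rpow_lt_one_of_one_lt_of_neg one_lt_two (by linarith)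
  exact div_pos two_pos (by linarith)

theorem two_add_two_mul_sewingConst_div {γ : ℝ} (hγ : 1 < γ) :
    2 + 2 * sewingConst γ / 2 ^ γ = sewingConst γ := by
  have h : (2 : ℝ) ^ (1 - γ) < 1 := Real.rpow_lt_one_of_one_lt_of_neg one_lt_two (by linarith)
  have h2 : (2 : ℝ) / 2 ^ γ = 2 ^ (1 - γ) := by rw [Real.rpow_sub two_pos, Real.rpow_one]
  rw [mul_comm, mul_div_assoc, h2, sewingConst]
  field_simp [(by linarith : (1 : ℝ) - 2 ^ (1 - γ) ≠ 0)]
  ring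

section Sewing

open Finset

variable {E : Type*} [NormedAddCommGroup E] {A : ℝ → ℝ → E} {K γ T : ℝ}

def DefectBoundedBy (A : ℝ → ℝ → E) (K γ T : ℝ) : Prop :=
  ∀ s u t : ℝ, 0 ≤ s → s ≤ u → u ≤ t → t ≤ T → ‖A s t - A s u - A u t‖ ≤ K * (t - s) ^ γ

theorem DefectBoundedBy.apply_self (hA : DefectBoundedBy A K γ T) (hγ : 0 < γ) {x : ℝ}
    (h0 : 0 ≤ x) (hT : x ≤ T) : A x x = 0 := by
  simpa [Real.zero_rpow hγ.ne'] using hA x x x h0 le_rfl le_rfl hT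

theorem DefectBoundedBy.norm_bisect_le (hA : DefectBoundedBy A K γ T) (hγ : 1 < γ) (hK : 0 ≤ K)
    {s x y t : ℝ} {R₁ R₂ : E} (hs : 0 ≤ s) (hsx : s ≤ x) (hxy : x ≤ y) (hyt : y ≤ t)
    (ht : t ≤ T) (hx : x - s ≤ (t - s) / 2) (hy : t - y ≤ (t - s) / 2)
    (h₁ : ‖R₁ - A s x‖ ≤ sewingConst γ * K * (x - s) ^ γ)
    (h₂ : ‖R₂ - A y t‖ ≤ sewingConst γ * K * (t - y) ^ γ) :
    ‖R₁ + A x y + R₂ - A s t‖ ≤ sewingConst γ * K * (t - s) ^ γ := by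
  have hc := (sewingConst_pos hγ).le
  have hhalf : ((t - s) / 2) ^ γ = (t - s) ^ γ / 2 ^ γ :=
    Real.div_rpow (by linarith) zero_le_two γ
  have h₁' : ‖R₁ - A s x‖ ≤ sewingConst γ * K * ((t - s) ^ γ / 2 ^ γ) :=
    h₁.trans (by rw [← hhalf]; gcongr)
  have h₂' : ‖R₂ - A y t‖ ≤ sewingConst γ * K * ((t - s) ^ γ / 2 ^ γ) :=
    h₂.trans (by rw [← hhalf]; gcongr)
  have h₃ := hA s x t hs hsx (hxy.trans hyt) ht
  have h₄ : ‖A x t - A x y - A y t‖ ≤ K * (t - s) ^ γ :=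
    (hA x y t (hs.trans hsx) hxy hyt ht).trans (by gcongr; linarith)
  calc ‖R₁ + A x y + R₂ - A s t‖
      = ‖(R₁ - A s x) + (R₂ - A y t) + -(A s t - A s x - A x t) +
          -(A x t - A x y - A y t)‖ := by
        congr 1; abel
    _ ≤ ‖R₁ - A s x‖ + ‖R₂ - A y t‖ + ‖A s t - A s x - A x t‖ + ‖A x t - A x y - A y t‖ :=
        norm_add₄_le.trans_eq (by rw [norm_neg, norm_neg])
    _ ≤ 2 * (sewingConst γ * K * ((t - s) ^ γ / 2 ^ γ)) + 2 * (K * (t - s) ^ γ) := by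
        linarith
    _ = (2 + 2 * sewingConst γ / 2 ^ γ) * K * (t - s) ^ γ := by ring
    _ = sewingConst γ * K * (t - s) ^ γ := by rw [two_add_two_mul_sewingConst_div hγ]

theorem DefectBoundedBy.norm_sum_sub_le (hA : DefectBoundedBy A K γ T) (hγ : 1 < γ) (hK : 0 ≤ K)
    {p : ℕ → ℝ} (hp : Monotone p) (h0 : 0 ≤ p 0) {n : ℕ} (hn : p n ≤ T) :
    ‖∑ i ∈ range n, A (p i) (p (i + 1)) - A (p 0) (p n)‖ ≤
      sewingConst γ * K * (p n - p 0) ^ γ := by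
  induction n using Nat.strong_induction_on generalizing p with
  | _ n ih =>
  rcases (hp (Nat.zero_le n)).eq_or_lt with heq | hlt
  · have hA0 : A (p 0) (p 0) = 0 := hA.apply_self (by linarith) h0 (heq ▸ hn)
    have hsum : ∑ i ∈ range n, A (p i) (p (i + 1)) = 0 := by
      refine sum_eq_zero fun i hi => ?_
      have hi := mem_range.mp hi
      rw [le_antisymm (heq ▸ hp hi.le) (hp (Nat.zero_le i)),
        le_antisymm (heq ▸ hp hi) (hp (Nat.zero_le (i + 1))), hA0]
    simp [hsum, ← heq, hA0, Real.zero_rpow (by linarith : γ ≠ 0)]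
  · obtain ⟨j, hjn, hjm, hmj⟩ :=
      exists_le_lt_succ (p := p) (m := (p 0 + p n) / 2) (n := n) (by linarith) (by linarith)
    obtain ⟨r, rfl⟩ : ∃ r, n = j + 1 + r := ⟨n - (j + 1), by omega⟩
    have h₁ := ih j (by omega) hp h0 ((hp (by omega)).trans hn)
    have h₂ := ih r (by omega) (p := fun i => p (j + 1 + i))
      (fun _ _ h => hp (by omega)) (h0.trans (hp (Nat.zero_le _))) hn
    simp only [add_zero, ← add_assoc] at h₂
    rw [sum_range_add, sum_range_succ]
    exact hA.norm_bisect_le hγ hK h0 (hp (Nat.zero_le j)) (hp j.le_succ) (hp (by omega)) hn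
      (by linarith) (by linarith) h₁ h₂

theorem DefectBoundedBy.norm_sub_min_add_max_le (hA : DefectBoundedBy A K γ T) (hγ : 0 < γ)
    (hK : 0 ≤ K) {x z u : ℝ} (hx : 0 ≤ x) (hxz : x ≤ z) (hz : z ≤ T) (hu : 0 ≤ u)
    (huT : u ≤ T) :
    ‖A x z - (A (min x u) (min z u) + A (max x u) (max z u))‖ ≤ K * (z - x) ^ γ := by
  have hbound : 0 ≤ K * (z - x) ^ γ := mul_nonneg hK (Real.rpow_nonneg (sub_nonneg.2 hxz) _)
  rcases le_total u x with hux | hxu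
  · rw [min_eq_right hux, min_eq_right (hux.trans hxz), max_eq_left hux,
      max_eq_left (hux.trans hxz), hA.apply_self hγ hu huT]
    simpa using hbound
  rcases le_total u z with huz | hzu
  · rw [min_eq_left hxu, min_eq_right huz, max_eq_right hxu, max_eq_left huz, ← sub_sub]
    exact hA x u z hx hxu huz hz
  · rw [min_eq_left hxu, min_eq_left hzu, max_eq_right hxu, max_eq_right hzu,
      hA.apply_self hγ hu huT]
    simpa using hbound

/-- Projecting one dyadic grid of `[0, T]` onto every `[a, b]`, rather than subdividing `[a, b]`,
makes the grids of `[a, u]` and `[u, b]` the two halves of the grid of `[a, b]` cut at `u`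
(`dyadicPartition_left`, `dyadicPartition_right`); the degenerate steps contribute `A x x = 0`. -/
noncomputable def dyadicPartition (T : ℝ) (n : ℕ) (a b : ℝ) (i : ℕ) : ℝ :=
  max a (min b (i * (T / 2 ^ n)))

section dyadicPartition

variable {n : ℕ} {a b : ℝ}

theorem dyadicPartition_zero (ha : 0 ≤ a) : dyadicPartition T n a b 0 = a := by
  simp [dyadicPartition, ha]

theorem dyadicPartition_two_pow (hab : a ≤ b) (hb : b ≤ T) :
    dyadicPartition T n a b (2 ^ n) = b := by
  rw [dyadicPartition, Nat.cast_pow, Nat.cast_ofNat, mul_div_cancel₀ _ (by positivity),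
    min_eq_left hb, max_eq_right hab]

theorem monotone_dyadicPartition (hT : 0 ≤ T) : Monotone (dyadicPartition T n a b) :=
  fun _ _ hij => max_le_max le_rfl (min_le_min le_rfl (by gcongr))

theorem dyadicPartition_succ_sub_le (hT : 0 ≤ T) (i : ℕ) :
    dyadicPartition T n a b (i + 1) - dyadicPartition T n a b i ≤ T / 2 ^ n := by
  have : ((i + 1 : ℕ) : ℝ) * (T / 2 ^ n) = i * (T / 2 ^ n) + T / 2 ^ n := by push_cast; ring
  simp only [dyadicPartition, this, max_def, min_def]
  split_ifs <;> nlinarith [div_nonneg hT (by positivity : (0 : ℝ) ≤ 2 ^ n)]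

theorem dyadicPartition_succ_two_mul (i : ℕ) :
    dyadicPartition T (n + 1) a b (2 * i) = dyadicPartition T n a b i := by
  simp only [dyadicPartition, pow_succ]
  push_cast
  field_simp

theorem mem_Icc_dyadicPartition (hab : a ≤ b) (i : ℕ) : dyadicPartition T n a b i ∈ Icc a b :=
  ⟨le_max_left _ _, max_le hab (min_le_left _ _)⟩

theorem dyadicPartition_left {u : ℝ} (hau : a ≤ u) (hub : u ≤ b) (i : ℕ) :
    dyadicPartition T n a u i = min (dyadicPartition T n a b i) u := by
  simp only [dyadicPartition, max_def, min_def]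
  split_ifs <;> linarith

theorem dyadicPartition_right {u : ℝ} (hau : a ≤ u) (hub : u ≤ b) (i : ℕ) :
    dyadicPartition T n u b i = max (dyadicPartition T n a b i) u := by
  simp only [dyadicPartition, max_def, min_def]
  split_ifs <;> linarith

end dyadicPartition

noncomputable def dyadicSum (A : ℝ → ℝ → E) (T : ℝ) (n : ℕ) (a b : ℝ) : E :=
  ∑ i ∈ range (2 ^ n), A (dyadicPartition T n a b i) (dyadicPartition T n a b (i + 1))

section dyadicSum

variable {n : ℕ} {a b : ℝ}

theorem norm_sum_le_of_dyadic (hγ : 1 ≤ γ) (hK : 0 ≤ K) (hT : 0 ≤ T) (ha : 0 ≤ a)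
    (hab : a ≤ b) (hb : b ≤ T) {f : ℕ → E}
    (hf : ∀ i < 2 ^ n, ‖f i‖ ≤
      K * (dyadicPartition T n a b (i + 1) - dyadicPartition T n a b i) ^ γ) :
    ‖∑ i ∈ range (2 ^ n), f i‖ ≤ K * (T / 2 ^ n) ^ (γ - 1) * (b - a) := by
  have hsum := sum_sub_rpow_le (p := dyadicPartition T n a b) (n := 2 ^ n) hγ fun i _ =>
    ⟨sub_nonneg.2 (monotone_dyadicPartition hT i.le_succ), dyadicPartition_succ_sub_le hT i⟩
  rw [dyadicPartition_two_pow hab hb, dyadicPartition_zero ha] at hsum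
  calc ‖∑ i ∈ range (2 ^ n), f i‖
      ≤ ∑ i ∈ range (2 ^ n),
          K * (dyadicPartition T n a b (i + 1) - dyadicPartition T n a b i) ^ γ :=
        (norm_sum_le _ _).trans (sum_le_sum fun i hi => hf i (mem_range.mp hi))
    _ ≤ K * (T / 2 ^ n) ^ (γ - 1) * (b - a) := by
        rw [← mul_sum, mul_assoc]; gcongr

theorem DefectBoundedBy.dist_dyadicSum_succ_le (hA : DefectBoundedBy A K γ T) (hγ : 1 ≤ γ)
    (hK : 0 ≤ K) (hT : 0 ≤ T) (ha : 0 ≤ a) (hab : a ≤ b) (hb : b ≤ T) :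
    dist (dyadicSum A T n a b) (dyadicSum A T (n + 1) a b) ≤
      K * (T / 2 ^ n) ^ (γ - 1) * (b - a) := by
  have hq : ∀ i, dyadicPartition T (n + 1) a b (2 * i) = dyadicPartition T n a b i :=
    dyadicPartition_succ_two_mul
  rw [dist_eq_norm, dyadicSum, dyadicSum, pow_succ', sum_range_two_mul, ← sum_sub_distrib]
  refine norm_sum_le_of_dyadic hγ hK hT ha hab hb fun i _ => ?_
  rw [show 2 * i + 1 + 1 = 2 * (i + 1) by ring, hq, hq, sub_add_eq_sub_sub]
  have hmono := monotone_dyadicPartition (n := n + 1) (a := a) (b := b) hT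
  exact hA _ _ _ (ha.trans (mem_Icc_dyadicPartition hab i).1) (hq i ▸ hmono (by omega))
    (hq (i + 1) ▸ hmono (by omega)) ((mem_Icc_dyadicPartition hab (i + 1)).2.trans hb)

theorem DefectBoundedBy.norm_dyadicSum_sub_add_le (hA : DefectBoundedBy A K γ T) (hγ : 1 ≤ γ)
    (hK : 0 ≤ K) (hT : 0 ≤ T) {u : ℝ} (ha : 0 ≤ a) (hau : a ≤ u) (hub : u ≤ b) (hb : b ≤ T) :
    ‖dyadicSum A T n a b - (dyadicSum A T n a u + dyadicSum A T n u b)‖ ≤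
      K * (T / 2 ^ n) ^ (γ - 1) * (b - a) := by
  have hab := hau.trans hub
  simp only [dyadicSum, dyadicPartition_left hau hub, dyadicPartition_right hau hub,
    ← sum_add_distrib, ← sum_sub_distrib]
  refine norm_sum_le_of_dyadic hγ hK hT ha hab hb fun i _ => ?_
  exact hA.norm_sub_min_add_max_le (by linarith) hK (ha.trans (mem_Icc_dyadicPartition hab i).1)
    (monotone_dyadicPartition hT i.le_succ) ((mem_Icc_dyadicPartition hab (i + 1)).2.trans hb)
    (ha.trans hau) (hub.trans hb)

theorem DefectBoundedBy.norm_dyadicSum_sub_le (hA : DefectBoundedBy A K γ T) (hγ : 1 < γ)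
    (hK : 0 ≤ K) (hT : 0 ≤ T) (ha : 0 ≤ a) (hab : a ≤ b) (hb : b ≤ T) :
    ‖dyadicSum A T n a b - A a b‖ ≤ sewingConst γ * K * (b - a) ^ γ := by
  have h := hA.norm_sum_sub_le hγ hK (monotone_dyadicPartition (n := n) (a := a) (b := b) hT)
    ((dyadicPartition_zero ha).symm ▸ ha) (n := 2 ^ n)
    ((dyadicPartition_two_pow hab hb).symm ▸ hb)
  rwa [dyadicPartition_zero ha, dyadicPartition_two_pow hab hb] at h

end dyadicSum

noncomputable def sewingMap (A : ℝ → ℝ → E) (T a b : ℝ) : E :=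
  limUnder atTop fun n => dyadicSum A T n a b

section sewingMap

variable [CompleteSpace E] {a b : ℝ}

theorem DefectBoundedBy.tendsto_dyadicSum (hA : DefectBoundedBy A K γ T) (hγ : 1 < γ)
    (hK : 0 ≤ K) (hT : 0 ≤ T) (ha : 0 ≤ a) (hab : a ≤ b) (hb : b ≤ T) :
    Tendsto (fun n => dyadicSum A T n a b) atTop (nhds (sewingMap A T a b)) := by
  refine (cauchySeq_of_le_geometric _ (K * T ^ (γ - 1) * (b - a))
    (Real.rpow_lt_one_of_one_lt_of_neg one_lt_two (by linarith : -(γ - 1) < 0))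
    fun n => ?_).tendsto_limUnder
  refine (hA.dist_dyadicSum_succ_le hγ.le hK hT ha hab hb).trans_eq ?_
  rw [div_two_pow_rpow hT]
  ring

theorem DefectBoundedBy.sewingMap_add (hA : DefectBoundedBy A K γ T) (hγ : 1 < γ) (hK : 0 ≤ K)
    (hT : 0 ≤ T) {u : ℝ} (ha : 0 ≤ a) (hau : a ≤ u) (hub : u ≤ b) (hb : b ≤ T) :
    sewingMap A T a u + sewingMap A T u b = sewingMap A T a b := by
  have hdefect : Tendsto
      (fun n => dyadicSum A T n a b - (dyadicSum A T n a u + dyadicSum A T n u b))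
      atTop (nhds 0) := by
    refine squeeze_zero_norm (fun n => hA.norm_dyadicSum_sub_add_le hγ.le hK hT ha hau hub hb) ?_
    simpa using
      ((tendsto_div_two_pow_rpow hT (by linarith : 0 < γ - 1)).const_mul K).mul_const (b - a)
  have h := (hA.tendsto_dyadicSum hγ hK hT ha (hau.trans hub) hb).sub hdefect
  simp only [sub_sub_cancel, sub_zero] at h
  exact tendsto_nhds_unique ((hA.tendsto_dyadicSum hγ hK hT ha hau (hub.trans hb)).add
    (hA.tendsto_dyadicSum hγ hK hT (ha.trans hau) hub hb)) h

theorem DefectBoundedBy.sewingMap_self (hA : DefectBoundedBy A K γ T) (hγ : 1 < γ) (hK : 0 ≤ K)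
    (hT : 0 ≤ T) (ha : 0 ≤ a) (haT : a ≤ T) : sewingMap A T a a = 0 :=
  add_eq_left.mp (hA.sewingMap_add hγ hK hT ha le_rfl le_rfl haT)

theorem DefectBoundedBy.norm_sewingMap_sub_le (hA : DefectBoundedBy A K γ T) (hγ : 1 < γ)
    (hK : 0 ≤ K) (hT : 0 ≤ T) (ha : 0 ≤ a) (hab : a ≤ b) (hb : b ≤ T) :
    ‖sewingMap A T a b - A a b‖ ≤ sewingConst γ * K * (b - a) ^ γ :=
  le_of_tendsto' ((hA.tendsto_dyadicSum hγ hK hT ha hab hb).sub_const (A a b)).norm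
    fun _ => hA.norm_dyadicSum_sub_le hγ hK hT ha hab hb

theorem DefectBoundedBy.sum_sewingMap (hA : DefectBoundedBy A K γ T) (hγ : 1 < γ) (hK : 0 ≤ K)
    (hT : 0 ≤ T) {q : ℕ → ℝ} {k : ℕ} (hq : MonotoneOn q (Set.Iic k)) (h0 : 0 ≤ q 0)
    (hk : q k ≤ T) :
    ∑ i ∈ range k, sewingMap A T (q i) (q (i + 1)) = sewingMap A T (q 0) (q k) := by
  induction k with
  | zero => simp [hA.sewingMap_self hγ hK hT h0 hk]
  | succ k ih =>
    have hk' : q k ≤ q (k + 1) := hq (by simp) (by simp) k.le_succ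
    rw [sum_range_succ, ih (hq.mono (Iic_subset_Iic.2 k.le_succ)) (hk'.trans hk),
      hA.sewingMap_add hγ hK hT h0 (hq (by simp) (by simp) (Nat.zero_le k)) hk' hk]

theorem DefectBoundedBy.norm_sum_sub_sewingMap_le (hA : DefectBoundedBy A K γ T) (hγ : 1 < γ)
    (hK : 0 ≤ K) (hT : 0 ≤ T) {q : ℕ → ℝ} {k : ℕ} (hq : MonotoneOn q (Set.Iic k))
    (h0 : 0 ≤ q 0) (hk : q k ≤ T) :
    ‖∑ i ∈ range k, A (q i) (q (i + 1)) - sewingMap A T (q 0) (q k)‖ ≤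
      sewingConst γ * K * ∑ i ∈ range k, (q (i + 1) - q i) ^ γ := by
  rw [← hA.sum_sewingMap hγ hK hT hq h0 hk, ← sum_sub_distrib, mul_sum]
  refine (norm_sum_le _ _).trans (sum_le_sum fun i hi => ?_)
  have hi : i + 1 ≤ k := mem_range.mp hi
  rw [norm_sub_rev]
  exact hA.norm_sewingMap_sub_le hγ hK hT (h0.trans (hq (Nat.zero_le k) (by omega : i ≤ k)
    (Nat.zero_le i))) (hq (by omega : i ≤ k) hi i.le_succ) ((hq hi Set.self_mem_Iic hi).trans hk)

theorem DefectBoundedBy.isPartitionLimit_sewingMap (hA : DefectBoundedBy A K γ T) (hγ : 1 < γ)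
    (hK : 0 ≤ K) (hT : 0 ≤ T) {t : ℝ} (ht : t ∈ Icc 0 T) : IsPartitionLimit 0 t A (sewingMap A T 0 t) := by
  intro p k mesh hp0 hpk hmono hmesh hmesh0
  rw [tendsto_iff_norm_sub_tendsto_zero]
  refine squeeze_zero (fun n => norm_nonneg _)
    (g := fun n => sewingConst γ * K * (mesh n ^ (γ - 1) * t)) (fun n => ?_) ?_
  · have hsteps := sum_sub_rpow_le (p := p n) (n := k n) hγ.le fun i hi =>
      ⟨sub_nonneg.2 (hmono n i hi), hmesh n i hi⟩
    have h := hA.norm_sum_sub_sewingMap_le hγ hK hT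
      (monotoneOn_of_le_add_one ordConnected_Iic fun i _ _ hi => hmono n i (by simpa using hi))
      ((hp0 n).symm ▸ le_rfl) ((hpk n).symm ▸ ht.2)
    rw [hpk n, hp0 n, sub_zero] at hsteps
    rw [hpk n, hp0 n] at h
    exact h.trans (mul_le_mul_of_nonneg_left hsteps (mul_nonneg (sewingConst_pos hγ).le hK))
  · have h := (Real.continuousAt_rpow_const 0 (γ - 1) (Or.inr (by linarith))).tendsto.comp
      hmesh0
    simpa [Real.zero_rpow (by linarith : γ - 1 ≠ 0)] using
      (h.mul_const t).const_mul (sewingConst γ * K)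

end sewingMap

end Sewing

theorem norm_germ_defect_le {U' V W VV : Type*}
    [NormedAddCommGroup U'] [NormedSpace ℝ U'] [NormedAddCommGroup V] [NormedSpace ℝ V]
    [NormedAddCommGroup W] [NormedSpace ℝ W] [NormedAddCommGroup VV] [NormedSpace ℝ VV]
    (tensor : V →L[ℝ] V →L[ℝ] VV) (X : ℝ → V) (XX : ℝ → ℝ → VV) (Y : ℝ → W →L[ℝ] U')
    (Y' : ℝ → V →L[ℝ] W →L[ℝ] U') (Z : ℝ → W) (Z' : ℝ → V →L[ℝ] W) (M : ℝ → VV →L[ℝ] U')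
    {s u t r α CX CXX CY MY' CRY CZ' MZ' CRZ CM : ℝ} (hr : 0 ≤ r)
    (chen : XX s t = XX s u + XX u t + tensor (X u - X s) (X t - X u))
    (hM : ∀ v v' : V, M s (tensor v v') = Y' s v (Z' s v'))
    (hXsu : ‖X u - X s‖ ≤ CX * r ^ α) (hXut : ‖X t - X u‖ ≤ CX * r ^ α)
    (hXX : ‖XX u t‖ ≤ CXX * r ^ (2 * α))
    (hY : ‖Y u - Y s‖ ≤ CY * r ^ α) (hY' : ‖Y' s‖ ≤ MY')
    (hRY : ‖Y u - Y s - Y' s (X u - X s)‖ ≤ CRY * r ^ (2 * α))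
    (hZ' : ‖Z' u - Z' s‖ ≤ CZ' * r ^ α) (hZ'u : ‖Z' u‖ ≤ MZ')
    (hRZ : ‖Z t - Z u - Z' u (X t - X u)‖ ≤ CRZ * r ^ (2 * α))
    (hMsu : ‖M u - M s‖ ≤ CM * r ^ α) :
    ‖(Y s (Z t - Z s) + M s (XX s t)) - (Y s (Z u - Z s) + M s (XX s u)) -
        (Y u (Z t - Z u) + M u (XX u t))‖ ≤
      (MY' * CZ' * CX ^ 2 + CY * CRZ + CRY * MZ' * CX + CM * CXX) * r ^ (3 * α) := by
  have hpow : ∀ n : ℕ, r ^ (n * α) = (r ^ α) ^ n := fun n => by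
    rw [mul_comm, Real.rpow_mul_natCast hr]
  rw [show (2 : ℝ) * α = (2 : ℕ) * α by norm_num, hpow] at hXX hRY hRZ
  rw [show (3 : ℝ) * α = (3 : ℕ) * α by norm_num, hpow]
  have hdefect : (Y s (Z t - Z s) + M s (XX s t)) - (Y s (Z u - Z s) + M s (XX s u)) -
      (Y u (Z t - Z u) + M u (XX u t)) =
      -((Y u - Y s) (Z t - Z u - Z' u (X t - X u)) +
        (Y u - Y s - Y' s (X u - X s)) (Z' u (X t - X u)) +
        Y' s (X u - X s) ((Z' u - Z' s) (X t - X u)) + (M u - M s) (XX u t)) := by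
    simp only [chen, map_add, map_sub, sub_apply, hM]
    abel
  have h₁ := (Y u - Y s).le_of_opNorm_le_of_le hY hRZ
  have h₂ := (Y u - Y s - Y' s (X u - X s)).le_of_opNorm_le_of_le hRY
    ((Z' u).le_of_opNorm_le_of_le hZ'u hXut)
  have h₃ := (Y' s (X u - X s)).le_of_opNorm_le_of_le ((Y' s).le_of_opNorm_le_of_le hY' hXsu)
    ((Z' u - Z' s).le_of_opNorm_le_of_le hZ' hXut)
  have h₄ := (M u - M s).le_of_opNorm_le_of_le hMsu hXX
  rw [hdefect, norm_neg]
  refine norm_add₄_le.trans ?_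
  linarith

theorem controlled_vs_controlled_integral_general {U' V W VV : Type*}
    [NormedAddCommGroup U'] [NormedSpace ℝ U'] [CompleteSpace U']
    [NormedAddCommGroup V] [NormedSpace ℝ V]
    [NormedAddCommGroup W] [NormedSpace ℝ W]
    [NormedAddCommGroup VV] [NormedSpace ℝ VV]
    (tensor : V →L[ℝ] V →L[ℝ] VV)
    (α T : ℝ) (hα1 : 1/3 < α) (hT : 0 < T)
    (X : ℝ → V) (XX : ℝ → ℝ → VV) (CX CXX : ℝ)
    (hX : ∀ s t : ℝ, 0 ≤ s → s ≤ t → t ≤ T →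
      ‖X t - X s‖ ≤ CX * |t - s| ^ α)
    (hXX : ∀ s t : ℝ, 0 ≤ s → s ≤ t → t ≤ T →
      ‖XX s t‖ ≤ CXX * |t - s| ^ (2*α))
    (chen : ∀ s u t : ℝ, 0 ≤ s → s ≤ u → u ≤ t → t ≤ T →
      XX s t = XX s u + XX u t + tensor (X u - X s) (X t - X u))
    -- the controlled path (Y, Y') with values in L(W, U')
    (Y : ℝ → W →L[ℝ] U') (Y' : ℝ → V →L[ℝ] W →L[ℝ] U')
    (CY MY' CRY : ℝ)
    (hY : ∀ s t : ℝ, 0 ≤ s → s ≤ t → t ≤ T → ‖Y t - Y s‖ ≤ CY * |t - s| ^ α)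
    (hY'bdd : ∀ t : ℝ, 0 ≤ t → t ≤ T → ‖Y' t‖ ≤ MY')
    (hRY : ∀ s t : ℝ, 0 ≤ s → s ≤ t → t ≤ T →
      ‖Y t - Y s - Y' s (X t - X s)‖ ≤ CRY * |t - s| ^ (2*α))
    -- the controlled path (Z, Z') with values in W
    (Z : ℝ → W) (Z' : ℝ → V →L[ℝ] W) (CZ' MZ' CRZ : ℝ)
    (hZ' : ∀ s t : ℝ, 0 ≤ s → s ≤ t → t ≤ T →
      ‖Z' t - Z' s‖ ≤ CZ' * |t - s| ^ α)
    (hZ'bdd : ∀ t : ℝ, 0 ≤ t → t ≤ T → ‖Z' t‖ ≤ MZ')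
    (hRZ : ∀ s t : ℝ, 0 ≤ s → s ≤ t → t ≤ T →
      ‖Z t - Z s - Z' s (X t - X s)‖ ≤ CRZ * |t - s| ^ (2*α))
    -- the product `Y'·Z'` realised on `V ⊗ V`, with its α-Hölder constant
    (M : ℝ → VV →L[ℝ] U') (CM : ℝ)
    (hM : ∀ s : ℝ, ∀ v v' : V, M s (tensor v v') = Y' s v (Z' s v'))
    (hMholder : ∀ s t : ℝ, 0 ≤ s → s ≤ t → t ≤ T →
      ‖M t - M s‖ ≤ CM * |t - s| ^ α) :
    -- coherence bound for the germ, with C depending only on α and T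
    (∃ C : ℝ, ∀ s u t : ℝ, 0 ≤ s → s ≤ u → u ≤ t → t ≤ T →
      ‖(Y s (Z t - Z s) + M s (XX s t)) -
        (Y s (Z u - Z s) + M s (XX s u)) -
        (Y u (Z t - Z u) + M u (XX u t))‖
        ≤ C * (MY' * CZ' * CX^2 + CY * CRZ + CRY * MZ' * CX + CM * CXX) *
            |t - s| ^ (3*α)) ∧
    -- consequently the integral exists as a limit of compensated Riemann sums
    (∃ I : ℝ → U', I 0 = 0 ∧ ∀ t ∈ Icc (0:ℝ) T,
      IsPartitionLimit 0 t
        (fun u v => Y u (Z v - Z u) + M u (XX u v)) (I t)) := by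
  have hα : 0 < α := by linarith
  have hcoh : ∀ s u t : ℝ, 0 ≤ s → s ≤ u → u ≤ t → t ≤ T →
      ‖(Y s (Z t - Z s) + M s (XX s t)) - (Y s (Z u - Z s) + M s (XX s u)) -
        (Y u (Z t - Z u) + M u (XX u t))‖ ≤
      (MY' * CZ' * CX^2 + CY * CRZ + CRY * MZ' * CX + CM * CXX) * |t - s| ^ (3*α) := by
    intro s u t hs hsu hut ht
    have h2α : 0 ≤ 2 * α := by positivity
    exact norm_germ_defect_le tensor X XX Y Y' Z Z' M (abs_nonneg _) (chen s u t hs hsu hut ht)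
      (hM s) (norm_le_mul_abs_rpow_of_subinterval hX hα.le hs le_rfl hsu hut ht)
      (norm_le_mul_abs_rpow_of_subinterval hX hα.le hs hsu hut le_rfl ht)
      (norm_le_mul_abs_rpow_of_subinterval hXX h2α hs hsu hut le_rfl ht)
      (norm_le_mul_abs_rpow_of_subinterval hY hα.le hs le_rfl hsu hut ht)
      (hY'bdd s hs (by linarith))
      (norm_le_mul_abs_rpow_of_subinterval hRY h2α hs le_rfl hsu hut ht)
      (norm_le_mul_abs_rpow_of_subinterval hZ' hα.le hs le_rfl hsu hut ht)
      (hZ'bdd u (by linarith) (by linarith))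
      (norm_le_mul_abs_rpow_of_subinterval hRZ h2α hs hsu hut le_rfl ht)
      (norm_le_mul_abs_rpow_of_subinterval hMholder hα.le hs le_rfl hsu hut ht)
  have hA : DefectBoundedBy (fun s t => Y s (Z t - Z s) + M s (XX s t))
      (MY' * CZ' * CX^2 + CY * CRZ + CRY * MZ' * CX + CM * CXX) (3*α) T :=
    fun s u t hs hsu hut ht => by
      simpa [abs_of_nonneg (sub_nonneg.2 (hsu.trans hut))] using hcoh s u t hs hsu hut ht
  have hK := nonneg_of_mul_nonneg_left
    ((norm_nonneg _).trans (hA 0 0 T le_rfl le_rfl hT.le le_rfl))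
    (by simpa using Real.rpow_pos_of_pos hT (3 * α))
  refine ⟨⟨1, fun s u t hs hsu hut ht => by simpa using hcoh s u t hs hsu hut ht⟩,
    fun t => sewingMap _ T 0 t, hA.sewingMap_self (by linarith) hK hT.le le_rfl hT.le,
    fun t ht => hA.isPartitionLimit_sewingMap (by linarith) hK hT.le ht⟩

/-- Integration of a controlled path `(Y, Y')` (values in
`L(W, U')`) against a controlled path `(Z, Z')` (values in `W`): the germ
`Ξ_{st} = Y_s Z_{st} + (Y'_s · Z'_s) 𝕏_{st}`, with
`(Y'_s · Z'_s)(v ⊗ v') = Y'_s(v)(Z'_s(v'))` (modelled by `M s : VV →L U'`),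
satisfies the stated coherence bound, and consequently (sewing) the integral
`∫_0^t Y d_X Z = lim Σ (Y_u Z_{uv} + (Y'_u·Z'_u)𝕏_{uv})` exists. -/
theorem controlled_vs_controlled_integral {U' V W VV : Type*}
    [NormedAddCommGroup U'] [NormedSpace ℝ U'] [CompleteSpace U']
    [NormedAddCommGroup V] [NormedSpace ℝ V]
    [NormedAddCommGroup W] [NormedSpace ℝ W]
    [NormedAddCommGroup VV] [NormedSpace ℝ VV]
    (tensor : V →L[ℝ] V →L[ℝ] VV)
    (htensor_norm : ∀ x y : V, ‖tensor x y‖ ≤ ‖x‖ * ‖y‖)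
    (α T : ℝ) (hα1 : 1/3 < α) (hα2 : α ≤ 1/2) (hT : 0 < T)
    (X : ℝ → V) (XX : ℝ → ℝ → VV) (CX CXX : ℝ)
    (hX : ∀ s t : ℝ, 0 ≤ s → s ≤ t → t ≤ T →
      ‖X t - X s‖ ≤ CX * |t - s| ^ α)
    (hXX : ∀ s t : ℝ, 0 ≤ s → s ≤ t → t ≤ T →
      ‖XX s t‖ ≤ CXX * |t - s| ^ (2*α))
    (chen : ∀ s u t : ℝ, 0 ≤ s → s ≤ u → u ≤ t → t ≤ T →
      XX s t = XX s u + XX u t + tensor (X u - X s) (X t - X u))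
    -- the controlled path (Y, Y') with values in L(W, U')
    (Y : ℝ → W →L[ℝ] U') (Y' : ℝ → V →L[ℝ] W →L[ℝ] U')
    (CY MY' CRY : ℝ)
    (hY : ∀ s t : ℝ, 0 ≤ s → s ≤ t → t ≤ T → ‖Y t - Y s‖ ≤ CY * |t - s| ^ α)
    (hY'bdd : ∀ t : ℝ, 0 ≤ t → t ≤ T → ‖Y' t‖ ≤ MY')
    (hRY : ∀ s t : ℝ, 0 ≤ s → s ≤ t → t ≤ T →
      ‖Y t - Y s - Y' s (X t - X s)‖ ≤ CRY * |t - s| ^ (2*α))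
    -- the controlled path (Z, Z') with values in W
    (Z : ℝ → W) (Z' : ℝ → V →L[ℝ] W) (CZ' MZ' CRZ : ℝ)
    (hZ' : ∀ s t : ℝ, 0 ≤ s → s ≤ t → t ≤ T →
      ‖Z' t - Z' s‖ ≤ CZ' * |t - s| ^ α)
    (hZ'bdd : ∀ t : ℝ, 0 ≤ t → t ≤ T → ‖Z' t‖ ≤ MZ')
    (hRZ : ∀ s t : ℝ, 0 ≤ s → s ≤ t → t ≤ T →
      ‖Z t - Z s - Z' s (X t - X s)‖ ≤ CRZ * |t - s| ^ (2*α))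
    -- the product `Y'·Z'` realised on `V ⊗ V`, with its α-Hölder constant
    (M : ℝ → VV →L[ℝ] U') (CM : ℝ)
    (hM : ∀ s : ℝ, ∀ v v' : V, M s (tensor v v') = Y' s v (Z' s v'))
    (hMholder : ∀ s t : ℝ, 0 ≤ s → s ≤ t → t ≤ T →
      ‖M t - M s‖ ≤ CM * |t - s| ^ α) :
    -- coherence bound for the germ, with C depending only on α and T
    (∃ C : ℝ, ∀ s u t : ℝ, 0 ≤ s → s ≤ u → u ≤ t → t ≤ T →
      ‖(Y s (Z t - Z s) + M s (XX s t)) -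
        (Y s (Z u - Z s) + M s (XX s u)) -
        (Y u (Z t - Z u) + M u (XX u t))‖
        ≤ C * (MY' * CZ' * CX^2 + CY * CRZ + CRY * MZ' * CX + CM * CXX) *
            |t - s| ^ (3*α)) ∧
    -- consequently the integral exists as a limit of compensated Riemann sums
    (∃ I : ℝ → U', I 0 = 0 ∧ ∀ t ∈ Icc (0:ℝ) T,
      IsPartitionLimit 0 t
        (fun u v => Y u (Z v - Z u) + M u (XX u v)) (I t)) :=
  controlled_vs_controlled_integral_general tensor α T hα1 hT X XX CX CXX hX hXX chen Y Y' CY MY'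
    CRY hY hY'bdd hRY Z Z' CZ' MZ' CRZ hZ' hZ'bdd hRZ M CM hM hMholder
end

section
/- Let X : [0,T] → V be α-Hölder with α ∈ (1/3,1/2], let (Z, Z') be a controlled path with values in U, and let g : [0,T] × U → W be such that: for each x, (g(·,x), h(·,x)) is a controlled path (with Gubinelli derivative h(·,x) ∈ C^α([0,T]; L(V,W))) with remainder bounds uniform along the path Z; g(t,·) is twice continuously differentiable for each t; and h(t,·) is C¹ with the map (t,x) ↦ Dh(t,x) continuous. Then η_t := g(t, Z_t) is a controlled path with respect to X with Gubinelli derivative ∂_X η_t = h(t, Z_t) + Dg(t, Z_t) ∘ Z'_t, i.e., the remainder R^η_{st} := g(t,Z_t) − g(s,Z_s) − h(s,Z_s)X_{st} − Dg(s,Z_s)(Z'_s X_{st}) satisfies sup_{s<t}|R^η_{st}|/|t−s|^{2α} < ∞, provided additionally that the quantities sup_s ‖h(·,Z_s)‖_α, sup_s ‖Dg(·,Z_s)‖_α, sup_t ‖R^{g(·,Z_t)}‖_{2α}, and the sups of |Dh|, |Dg|, |D²g| over the relevant compact sets are finite. -/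
/-!
Write `x = Z_s`, `y = Z_t`. The increment of `η_t = g(t, Z_t)` splits into the spatial
second-order Taylor remainder of `g(t, ·)` between `x` and `y` (of order `‖y - x‖² ≲ |t-s|^{2α}`
by the bound on `D²g`), the time remainder `R^{g(·,x)}_{st}`, the cross term
`(Dg(t,x) - Dg(s,x))(y - x)` (a product of two `α`-Hölder increments), and
`Dg(s,x)` applied to the remainder `R^Z_{st}`. The increment of the candidate Gubinelli
derivative `h(t,Z_t) + Dg(t,Z_t) ∘ Z'_t` is handled the same way to first order, using that
`Z'` is bounded on `[0,T]`.
-/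

open Set

theorem Convex.norm_image_sub_sub_fderiv_le_s16 {E F : Type*} [NormedAddCommGroup E]
    [NormedSpace ℝ E] [NormedAddCommGroup F] [NormedSpace ℝ F] {f : E → F} {s : Set E} {M : ℝ}
    {x y : E} (hs : Convex ℝ s)
    (hf : ∀ z ∈ s, DifferentiableAt ℝ f z) (hf' : ∀ z ∈ s, DifferentiableAt ℝ (fderiv ℝ f) z)
    (bound : ∀ z ∈ s, ‖fderiv ℝ (fderiv ℝ f) z‖ ≤ M) (hx : x ∈ s) (hy : y ∈ s) :
    ‖f y - f x - fderiv ℝ f x (y - x)‖ ≤ M * ‖y - x‖ * ‖y - x‖ := by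
  have hM : 0 ≤ M := (norm_nonneg (fderiv ℝ (fderiv ℝ f) x)).trans (bound x hx)
  have hseg : segment ℝ x y ⊆ s := hs.segment_subset hx hy
  refine (convex_segment x y).norm_image_sub_le_of_norm_fderiv_le' (fun z hz => hf z (hseg hz))
    (fun z hz => ?_) (left_mem_segment ℝ x y) (right_mem_segment ℝ x y)
  calc ‖fderiv ℝ f z - fderiv ℝ f x‖ ≤ M * ‖z - x‖ :=
        hs.norm_image_sub_le_of_norm_fderiv_le hf' bound hx (hseg hz)
    _ ≤ M * ‖y - x‖ := by gcongr; exact norm_sub_le_of_mem_segment hz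

theorem norm_le_of_holderOn_Icc {E : Type*} [NormedAddCommGroup E] {f : ℝ → E} {C α T u : ℝ}
    (hα : 0 ≤ α) (hf : ∀ s t : ℝ, 0 ≤ s → s ≤ t → t ≤ T → ‖f t - f s‖ ≤ C * |t - s| ^ α)
    (hu : 0 ≤ u) (huT : u ≤ T) :
    ‖f u‖ ≤ ‖f 0‖ + |C| * T ^ α := by
  have hincr : ‖f u - f 0‖ ≤ |C| * T ^ α :=
    calc ‖f u - f 0‖ ≤ C * |u - 0| ^ α := hf 0 u le_rfl hu huT
      _ ≤ |C| * u ^ α := by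
        rw [sub_zero, abs_of_nonneg hu]
        exact mul_le_mul_of_nonneg_right (le_abs_self C) (Real.rpow_nonneg hu α)
      _ ≤ |C| * T ^ α := by gcongr
  linarith [norm_le_norm_sub_add (f u) (f 0)]

section ChainRule

variable {U V W : Type*} [NormedAddCommGroup U] [NormedSpace ℝ U]
  [NormedAddCommGroup V] [NormedSpace ℝ V] [NormedAddCommGroup W] [NormedSpace ℝ W]
  {S : Set U} {x y : U} {g₁ : U → W} {M N a b c e : ℝ}

theorem norm_add_fderiv_comp_sub_le {h₁ : U → V →L[ℝ] W} {H₀ : V →L[ℝ] W}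
    {L₀ : U →L[ℝ] W} {A₀ A₁ : V →L[ℝ] U} {K : ℝ} (hS : Convex ℝ S) (hx : x ∈ S) (hy : y ∈ S)
    (hh₁ : ∀ z ∈ S, DifferentiableAt ℝ h₁ z) (hg₁ : ∀ z ∈ S, DifferentiableAt ℝ (fderiv ℝ g₁) z)
    (hDh₁ : ∀ z ∈ S, ‖fderiv ℝ h₁ z‖ ≤ M) (hD2g₁ : ∀ z ∈ S, ‖fderiv ℝ (fderiv ℝ g₁) z‖ ≤ M)
    (hL₀ : ‖L₀‖ ≤ N) (hyx : ‖y - x‖ ≤ a) (hH : ‖h₁ x - H₀‖ ≤ b)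
    (hL : ‖fderiv ℝ g₁ x - L₀‖ ≤ c) (hA₁ : ‖A₁‖ ≤ K) (hA : ‖A₁ - A₀‖ ≤ e) :
    ‖(h₁ y + (fderiv ℝ g₁ y).comp A₁) - (H₀ + L₀.comp A₀)‖ ≤
      M * a + b + (M * a + c) * K + N * e := by
  have hM : 0 ≤ M := (norm_nonneg (fderiv ℝ h₁ x)).trans (hDh₁ x hx)
  have hDg₁ : ‖fderiv ℝ g₁ y - fderiv ℝ g₁ x‖ ≤ M * a :=
    (hS.norm_image_sub_le_of_norm_fderiv_le hg₁ hD2g₁ hx hy).trans (by gcongr)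
  calc ‖(h₁ y + (fderiv ℝ g₁ y).comp A₁) - (H₀ + L₀.comp A₀)‖
      = ‖(h₁ y - h₁ x) + (h₁ x - H₀) +
          ((fderiv ℝ g₁ y - fderiv ℝ g₁ x) + (fderiv ℝ g₁ x - L₀)).comp A₁ +
          L₀.comp (A₁ - A₀)‖ := by
        congr 1; ext v; simp only [add_apply, sub_apply,
          ContinuousLinearMap.comp_apply, map_sub]; abel
    _ ≤ ‖h₁ y - h₁ x‖ + ‖h₁ x - H₀‖ +
          ‖(fderiv ℝ g₁ y - fderiv ℝ g₁ x) + (fderiv ℝ g₁ x - L₀)‖ * ‖A₁‖ +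
          ‖L₀‖ * ‖A₁ - A₀‖ := by
        refine norm_add₄_le.trans ?_
        gcongr <;> exact ContinuousLinearMap.opNorm_comp_le _ _
    _ ≤ M * a + b + (M * a + c) * K + N * e := by
        have hh₁y : ‖h₁ y - h₁ x‖ ≤ M * a :=
          (hS.norm_image_sub_le_of_norm_fderiv_le hh₁ hDh₁ hx hy).trans (by gcongr)
        have hN : 0 ≤ N := (norm_nonneg _).trans hL₀
        have ha : 0 ≤ a := (norm_nonneg _).trans hyx
        have hc : 0 ≤ c := (norm_nonneg _).trans hL
        gcongr
        exact (norm_add_le _ _).trans (add_le_add hDg₁ hL)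

theorem norm_image_sub_sub_sub_fderiv_le {q w : W} {L₀ : U →L[ℝ] W} {u : U} (hS : Convex ℝ S)
    (hx : x ∈ S) (hy : y ∈ S) (hg₁ : ∀ z ∈ S, DifferentiableAt ℝ g₁ z)
    (hg₁' : ∀ z ∈ S, DifferentiableAt ℝ (fderiv ℝ g₁) z)
    (hD2g₁ : ∀ z ∈ S, ‖fderiv ℝ (fderiv ℝ g₁) z‖ ≤ M) (hL₀ : ‖L₀‖ ≤ N)
    (hyx : ‖y - x‖ ≤ a) (hq : ‖g₁ x - q - w‖ ≤ b) (hL : ‖fderiv ℝ g₁ x - L₀‖ ≤ c)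
    (hu : ‖y - x - u‖ ≤ e) :
    ‖g₁ y - q - w - L₀ u‖ ≤ M * a ^ 2 + b + c * a + N * e := by
  have hM : 0 ≤ M := (norm_nonneg (fderiv ℝ (fderiv ℝ g₁) x)).trans (hD2g₁ x hx)
  have hN : 0 ≤ N := (norm_nonneg _).trans hL₀
  have ha : 0 ≤ a := (norm_nonneg _).trans hyx
  have hc : 0 ≤ c := (norm_nonneg _).trans hL
  calc ‖g₁ y - q - w - L₀ u‖
      = ‖(g₁ y - g₁ x - fderiv ℝ g₁ x (y - x)) + (g₁ x - q - w) +
          (fderiv ℝ g₁ x - L₀) (y - x) + L₀ (y - x - u)‖ := by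
        congr 1; simp only [sub_apply, map_sub]; abel
    _ ≤ M * ‖y - x‖ * ‖y - x‖ + ‖g₁ x - q - w‖ + ‖fderiv ℝ g₁ x - L₀‖ * ‖y - x‖ +
          ‖L₀‖ * ‖y - x - u‖ := by
        refine norm_add₄_le.trans ?_
        gcongr
        · exact hS.norm_image_sub_sub_fderiv_le_s16 hg₁ hg₁' hD2g₁ hx hy
        all_goals exact ContinuousLinearMap.le_opNorm _ _
    _ ≤ M * a * a + b + c * a + N * e := by gcongr
    _ = M * a ^ 2 + b + c * a + N * e := by ring

end ChainRule

theorem chain_rule_controlled_general {U V W : Type*}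
    [NormedAddCommGroup U] [NormedSpace ℝ U]
    [NormedAddCommGroup V] [NormedSpace ℝ V]
    [NormedAddCommGroup W] [NormedSpace ℝ W]
    (α T : ℝ) (hα1 : 1/3 < α)
    (X : ℝ → V)
    -- the controlled path (Z, Z')
    (Z : ℝ → U) (Z' : ℝ → V →L[ℝ] U) (CZ CZ' CRZ : ℝ)
    (hZ : ∀ s t : ℝ, 0 ≤ s → s ≤ t → t ≤ T → ‖Z t - Z s‖ ≤ CZ * |t - s| ^ α)
    (hZ' : ∀ s t : ℝ, 0 ≤ s → s ≤ t → t ≤ T → ‖Z' t - Z' s‖ ≤ CZ' * |t - s| ^ α)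
    (hRZ : ∀ s t : ℝ, 0 ≤ s → s ≤ t → t ≤ T →
      ‖Z t - Z s - Z' s (X t - X s)‖ ≤ CRZ * |t - s| ^ (2*α))
    -- the space-time function g with Gubinelli derivative h in time
    (g : ℝ → U → W) (h : ℝ → U → V →L[ℝ] W)
    -- spatial regularity: g(t,·) is C², h(t,·) is C¹, Dh jointly continuous
    (hg_C2 : ∀ t : ℝ, ContDiff ℝ 2 (g t))
    (hh_C1 : ∀ t : ℝ, ContDiff ℝ 1 (h t))
    -- (g(·,x), h(·,x)) is a controlled path, remainder uniform along Z:
    -- sup_t ‖R^{g(·,Z_t)}‖_{2α} < ∞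
    (Cg : ℝ)
    (hRg : ∀ u : ℝ, 0 ≤ u → u ≤ T → ∀ s t : ℝ, 0 ≤ s → s ≤ t → t ≤ T →
      ‖g t (Z u) - g s (Z u) - (h s (Z u)) (X t - X s)‖ ≤ Cg * |t - s| ^ (2*α))
    -- sup_s ‖h(·,Z_s)‖_α < ∞
    (Ch : ℝ)
    (hhα : ∀ u : ℝ, 0 ≤ u → u ≤ T → ∀ s t : ℝ, 0 ≤ s → s ≤ t → t ≤ T →
      ‖h t (Z u) - h s (Z u)‖ ≤ Ch * |t - s| ^ α)
    -- sup_s ‖Dg(·,Z_s)‖_α < ∞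
    (CDg : ℝ)
    (hDgα : ∀ u : ℝ, 0 ≤ u → u ≤ T → ∀ s t : ℝ, 0 ≤ s → s ≤ t → t ≤ T →
      ‖fderiv ℝ (g t) (Z u) - fderiv ℝ (g s) (Z u)‖ ≤ CDg * |t - s| ^ α)
    -- sups of |Dh|, |Dg|, |D²g| over the relevant compact (convex) sets
    (M : ℝ)
    (hM : ∀ t : ℝ, 0 ≤ t → t ≤ T → ∀ x ∈ convexHull ℝ (Z '' Icc 0 T),
      ‖fderiv ℝ (h t) x‖ ≤ M ∧ ‖fderiv ℝ (g t) x‖ ≤ M ∧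
      ‖fderiv ℝ (fderiv ℝ (g t)) x‖ ≤ M) :
    -- η_t = g(t, Z_t) is a controlled path with Gubinelli derivative
    -- ∂_X η_t = h(t,Z_t) + Dg(t,Z_t) ∘ Z'_t :
    -- the Gubinelli derivative is α-Hölder …
    (∃ C' : ℝ, ∀ s t : ℝ, 0 ≤ s → s ≤ t → t ≤ T →
      ‖(h t (Z t) + (fderiv ℝ (g t) (Z t)).comp (Z' t)) -
        (h s (Z s) + (fderiv ℝ (g s) (Z s)).comp (Z' s))‖ ≤ C' * |t - s| ^ α) ∧
    -- … and the remainder R^η is 2α-Hölder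
    (∃ C : ℝ, ∀ s t : ℝ, 0 ≤ s → s ≤ t → t ≤ T →
      ‖g t (Z t) - g s (Z s) - (h s (Z s)) (X t - X s) -
        (fderiv ℝ (g s) (Z s)) (Z' s (X t - X s))‖ ≤ C * |t - s| ^ (2*α)) := by
  have hα : 0 ≤ α := by linarith
  set S := convexHull ℝ (Z '' Icc 0 T)
  have hS : Convex ℝ S := convex_convexHull ℝ _
  have hZS : ∀ u, 0 ≤ u → u ≤ T → Z u ∈ S := fun u hu huT =>
    subset_convexHull ℝ _ (mem_image_of_mem Z ⟨hu, huT⟩)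
  have hDg : ∀ t, Differentiable ℝ (fderiv ℝ (g t)) := fun t =>
    ((hg_C2 t).fderiv_right (m := 1) le_rfl).differentiable one_ne_zero
  constructor
  · refine ⟨M * CZ + Ch + (M * CZ + CDg) * (‖Z' 0‖ + |CZ'| * T ^ α) + M * CZ',
      fun s t hs hst ht => ?_⟩
    have hsT : s ≤ T := hst.trans ht
    have ht0 : 0 ≤ t := hs.trans hst
    refine (norm_add_fderiv_comp_sub_le hS (hZS s hs hsT) (hZS t ht0 ht)
      (fun z _ => (hh_C1 t).differentiable one_ne_zero z) (fun z _ => hDg t z)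
      (fun z hz => (hM t ht0 ht z hz).1) (fun z hz => (hM t ht0 ht z hz).2.2)
      (hM s hs hsT _ (hZS s hs hsT)).2.1 (hZ s t hs hst ht) (hhα s hs hsT s t hs hst ht)
      (hDgα s hs hsT s t hs hst ht) (norm_le_of_holderOn_Icc hα hZ' ht0 ht)
      (hZ' s t hs hst ht)).trans_eq (by ring)
  · refine ⟨M * CZ ^ 2 + Cg + CDg * CZ + M * CRZ, fun s t hs hst ht => ?_⟩
    have hsT : s ≤ T := hst.trans ht
    have ht0 : 0 ≤ t := hs.trans hst
    have hsq : |t - s| ^ (2 * α) = (|t - s| ^ α) ^ 2 := by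
      rw [mul_comm, ← Real.rpow_mul_natCast (abs_nonneg _)]; norm_num
    refine (norm_image_sub_sub_sub_fderiv_le hS (hZS s hs hsT) (hZS t ht0 ht)
      (fun z _ => (hg_C2 t).differentiable two_ne_zero z) (fun z _ => hDg t z)
      (fun z hz => (hM t ht0 ht z hz).2.2) (hM s hs hsT _ (hZS s hs hsT)).2.1
      (hZ s t hs hst ht) (hRg s hs hsT s t hs hst ht) (hDgα s hs hsT s t hs hst ht)
      (hRZ s t hs hst ht)).trans_eq (by rw [hsq]; ring)

/-- chain rule for controlled paths, Lemma 3.1: Let `(Z, Z')` be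
a controlled path with values in `U` and `g : [0,T] × U → W` a space-time
function such that for each `x` the pair `(g(·,x), h(·,x))` is a controlled
path, with remainder bounds uniform along the path `Z`; `g(t,·)` is C²; `h(t,·)`
is C¹ with `(t,x) ↦ Dh(t,x)` continuous; and the various sups below are finite.
Then `η_t = g(t, Z_t)` is a controlled path with Gubinelli derivative
`∂_X η_t = h(t, Z_t) + Dg(t, Z_t) ∘ Z'_t`. -/
theorem chain_rule_controlled {U V W : Type*}
    [NormedAddCommGroup U] [NormedSpace ℝ U]
    [NormedAddCommGroup V] [NormedSpace ℝ V]
    [NormedAddCommGroup W] [NormedSpace ℝ W]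
    (α T : ℝ) (hα1 : 1/3 < α) (hα2 : α ≤ 1/2) (hT : 0 < T)
    (X : ℝ → V) (CX : ℝ)
    (hX : ∀ s t : ℝ, 0 ≤ s → s ≤ t → t ≤ T → ‖X t - X s‖ ≤ CX * |t - s| ^ α)
    -- the controlled path (Z, Z')
    (Z : ℝ → U) (Z' : ℝ → V →L[ℝ] U) (CZ CZ' CRZ : ℝ)
    (hZ : ∀ s t : ℝ, 0 ≤ s → s ≤ t → t ≤ T → ‖Z t - Z s‖ ≤ CZ * |t - s| ^ α)
    (hZ' : ∀ s t : ℝ, 0 ≤ s → s ≤ t → t ≤ T → ‖Z' t - Z' s‖ ≤ CZ' * |t - s| ^ α)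
    (hRZ : ∀ s t : ℝ, 0 ≤ s → s ≤ t → t ≤ T →
      ‖Z t - Z s - Z' s (X t - X s)‖ ≤ CRZ * |t - s| ^ (2*α))
    -- the space-time function g with Gubinelli derivative h in time
    (g : ℝ → U → W) (h : ℝ → U → V →L[ℝ] W)
    -- spatial regularity: g(t,·) is C², h(t,·) is C¹, Dh jointly continuous
    (hg_C2 : ∀ t : ℝ, ContDiff ℝ 2 (g t))
    (hh_C1 : ∀ t : ℝ, ContDiff ℝ 1 (h t))
    (hDh_cont : Continuous (fun p : ℝ × U => fderiv ℝ (h p.1) p.2))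
    (hg_cont : Continuous (fun p : ℝ × U => g p.1 p.2))
    (hh_cont : Continuous (fun p : ℝ × U => h p.1 p.2))
    -- (g(·,x), h(·,x)) is a controlled path, remainder uniform along Z:
    -- sup_t ‖R^{g(·,Z_t)}‖_{2α} < ∞
    (Cg : ℝ)
    (hRg : ∀ u : ℝ, 0 ≤ u → u ≤ T → ∀ s t : ℝ, 0 ≤ s → s ≤ t → t ≤ T →
      ‖g t (Z u) - g s (Z u) - (h s (Z u)) (X t - X s)‖ ≤ Cg * |t - s| ^ (2*α))
    -- sup_s ‖h(·,Z_s)‖_α < ∞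
    (Ch : ℝ)
    (hhα : ∀ u : ℝ, 0 ≤ u → u ≤ T → ∀ s t : ℝ, 0 ≤ s → s ≤ t → t ≤ T →
      ‖h t (Z u) - h s (Z u)‖ ≤ Ch * |t - s| ^ α)
    -- sup_s ‖Dg(·,Z_s)‖_α < ∞
    (CDg : ℝ)
    (hDgα : ∀ u : ℝ, 0 ≤ u → u ≤ T → ∀ s t : ℝ, 0 ≤ s → s ≤ t → t ≤ T →
      ‖fderiv ℝ (g t) (Z u) - fderiv ℝ (g s) (Z u)‖ ≤ CDg * |t - s| ^ α)
    -- sups of |Dh|, |Dg|, |D²g| over the relevant compact (convex) sets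
    (M : ℝ)
    (hM : ∀ t : ℝ, 0 ≤ t → t ≤ T → ∀ x ∈ convexHull ℝ (Z '' Icc 0 T),
      ‖fderiv ℝ (h t) x‖ ≤ M ∧ ‖fderiv ℝ (g t) x‖ ≤ M ∧
      ‖fderiv ℝ (fderiv ℝ (g t)) x‖ ≤ M) :
    -- η_t = g(t, Z_t) is a controlled path with Gubinelli derivative
    -- ∂_X η_t = h(t,Z_t) + Dg(t,Z_t) ∘ Z'_t :
    -- the Gubinelli derivative is α-Hölder …
    (∃ C' : ℝ, ∀ s t : ℝ, 0 ≤ s → s ≤ t → t ≤ T →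
      ‖(h t (Z t) + (fderiv ℝ (g t) (Z t)).comp (Z' t)) -
        (h s (Z s) + (fderiv ℝ (g s) (Z s)).comp (Z' s))‖ ≤ C' * |t - s| ^ α) ∧
    -- … and the remainder R^η is 2α-Hölder
    (∃ C : ℝ, ∀ s t : ℝ, 0 ≤ s → s ≤ t → t ≤ T →
      ‖g t (Z t) - g s (Z s) - (h s (Z s)) (X t - X s) -
        (fderiv ℝ (g s) (Z s)) (Z' s (X t - X s))‖ ≤ C * |t - s| ^ (2*α)) :=
  chain_rule_controlled_general α T hα1 X Z Z' CZ CZ' CRZ hZ hZ' hRZ g h hg_C2 hh_C1 Cg hRg Ch hhα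
    CDg hDgα M hM
end
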